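/- arXiv:1906.05752 — 2 statements merged into one kernel-verified Lean document; each statement's English description precedes it below -/
import Mathlib

section
/- Assume (LIB)_η with constants η, C_L > 0 and ε₀ ∈ (0,1/2]. Let ε ∈ (0,ε₀] and let ω₁, …, ω_n ∈ Ω be points with dist(ω_i, ω_j) ≥ ε for all i ≠ j. Then for all reals a_j ≤ b_j (j = 1,…,n): ℙ_Θ( { θ ∈ Θ : a_j ≤ v(ω_j, θ) ≤ b_j for every j = 1,…,n } ) ≤ ∏_{j=1}^n exp(C_L·ε^{−η})·(b_j − a_j). -/
open scoped BigOperators Classical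

abbrev Site (d : ℕ) := Fin d → ℤ

def dist1 {d : ℕ} (x y : Site d) : ℕ := ∑ i, (x i - y i).natAbs

def norm1 {d : ℕ} (x : Site d) : ℕ := ∑ i, (x i).natAbs

def IsBox {d : ℕ} (B : Finset (Site d)) : Prop :=
  ∃ a b : Site d, (∀ i, a i ≤ b i) ∧ B = Finset.Icc a b

def IsRect {d : ℕ} (L : ℕ) (B : Finset (Site d)) : Prop :=
  ∃ a b : Site d, B = Finset.Icc a b ∧
    ∃ j₀ : Fin d, b j₀ = a j₀ + L ∧ ∀ j, j ≠ j₀ → b j = a j + 2 * L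

def IsBoxDiff {d : ℕ} (s : Finset (Site d)) : Prop :=
  s.Nonempty ∧ ∃ B₁ B₂ : Finset (Site d), IsBox B₁ ∧ (IsBox B₂ ∨ B₂ = ∅) ∧ s = B₁ \ B₂

def inBdry {d : ℕ} (s : Finset (Site d)) : Set (Site d) :=
  {u | u ∈ s ∧ ∃ u' : Site d, u' ∉ s ∧ dist1 u u' = 1}

noncomputable def HB {d : ℕ} (pot : Site d → ℝ) (B : Finset (Site d)) :
    Matrix B B ℝ :=
  fun x y => if dist1 (x : Site d) (y : Site d) = 1 then 1
    else if x = y then pot x else 0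

noncomputable def Gent {d : ℕ} (pot : Site d → ℝ) (B : Finset (Site d)) (E : ℝ)
    (x y : Site d) : ℝ :=
  if hx : x ∈ B then
    if hy : y ∈ B then ((HB pot B - E • 1)⁻¹) ⟨x, hx⟩ ⟨y, hy⟩ else 0
  else 0

noncomputable def GopNorm {d : ℕ} (pot : Site d → ℝ) (B : Finset (Site d)) (E : ℝ) : ℝ :=
  ‖Matrix.toEuclideanCLM (𝕜 := ℝ) (n := {x // x ∈ B}) ((HB pot B - E • 1)⁻¹)‖

def GInv {d : ℕ} (pot : Site d → ℝ) (B : Finset (Site d)) (E : ℝ) : Prop :=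
  IsUnit (HB pot B - E • 1)

def Regular {d : ℕ} (pot : Site d → ℝ) (m b : ℝ) (L : ℕ) (R : Finset (Site d)) (E : ℝ) : Prop :=
  GInv pot R E ∧ ∀ x ∈ inBdry R, ∀ y ∈ inBdry R, L ≤ dist1 x y →
    |Gent pot R E x y| ≤ Real.exp (-(m * ((L : ℝ) + (L : ℝ) ^ (b : ℝ))))

def Resonant {d : ℕ} (pot : Site d → ℝ) (m b : ℝ) (J : ℕ) (L : ℕ)
    (B : Finset (Site d)) (E : ℝ) : Prop :=
  ∃ s : Finset (Site d), IsBoxDiff s ∧ s ⊆ B ∧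
    (¬ GInv pot s E ∨ GopNorm pot s E > Real.exp (m * (L : ℝ) ^ (b : ℝ) / (16 * J)))

def JSparse {d : ℕ} (S : Set (Finset (Site d))) (J : ℕ) (B : Finset (Site d)) : Prop :=
  ¬ ∃ f : Fin J → Finset (Site d), (∀ j, f j ∈ S) ∧ (∀ j, f j ⊆ B) ∧
      ∀ i j, i ≠ j → Disjoint (f i) (f j)

noncomputable def nbrs {d : ℕ} (u : Site d) : Finset (Site d) :=
  Finset.univ.biUnion fun i : Fin d =>
    {Function.update u i (u i + 1), Function.update u i (u i - 1)}

noncomputable def bdryFinset {d : ℕ} (B : Finset (Site d)) : Finset (Site d × Site d) :=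
  ((B ×ˢ (B.biUnion nbrs \ B)).filter fun p => dist1 p.1 p.2 = 1)

-- strips
def IsStripOf {d : ℕ} (S B : Finset (Site d)) : Prop :=
  ∃ a b a' b' : Site d, (∀ i, a i ≤ b i) ∧ B = Finset.Icc a b ∧
    (∀ i, a' i ≤ b' i) ∧ S = Finset.Icc a' b' ∧
    ∃ j₀ : Fin d, (∀ j, j ≠ j₀ → a' j = a j ∧ b' j = b j) ∧ a j₀ ≤ a' j₀ ∧ b' j₀ ≤ b j₀

def IsLStripOf {d : ℕ} (L : ℕ) (S B : Finset (Site d)) : Prop :=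
  ∃ a b a' b' : Site d, (∀ i, a i ≤ b i) ∧ B = Finset.Icc a b ∧
    (∀ i, a' i ≤ b' i) ∧ S = Finset.Icc a' b' ∧
    ∃ j₀ : Fin d, (∀ j, j ≠ j₀ → a' j = a j ∧ b' j = b j) ∧ a j₀ ≤ a' j₀ ∧ b' j₀ ≤ b j₀ ∧
      b' j₀ + 1 = a' j₀ + L


open MeasureTheory

def libSigma {Ω Θ : Type*} [MetricSpace Ω] (v : Ω → Θ → ℝ) (ω : Ω) (ε : ℝ) :
    MeasurableSpace Θ :=
  ⨆ ω' ∈ {ω' : Ω | ε ≤ dist ω' ω}, MeasurableSpace.comap (v ω') (borel ℝ)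

/-- The local interpolation bound (LIB)_η with constants `CL`, `ε₀`. -/
def LIB {Ω Θ : Type*} [MetricSpace Ω] [MeasurableSpace Θ] (P : MeasureTheory.Measure Θ)
    (v : Ω → Θ → ℝ) (η CL ε₀ : ℝ) : Prop :=
  ∀ (ω : Ω) (ε : ℝ), 0 < ε → ε ≤ ε₀ → ∀ (a b : ℝ), a ≤ b →
    ∀ (A : Set Θ), MeasurableSet[libSigma v ω ε] A →
      P ({θ | a ≤ v ω θ ∧ v ω θ ≤ b} ∩ A) ≤
        ENNReal.ofReal (Real.exp (CL * ε ^ (-η)) * (b - a)) * P A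

/-- The Diophantine condition (UPA)_A with constant `cU`. -/
def UPA {Ω : Type*} [MetricSpace Ω] {d : ℕ} (T : Site d → Ω → Ω) (A cU : ℝ) : Prop :=
  ∀ (ω : Ω) (L : ℕ), 1 ≤ L → ∀ x : Site d, x ≠ 0 → norm1 x ≤ L →
    cU * (L : ℝ) ^ (-A) ≤ dist (T x ω) ω

/-- The finite-dimensionality condition (NET)_ν with constant `CN`. -/
def NET (Ω : Type*) [MetricSpace Ω] (ν CN : ℝ) : Prop :=
  ∀ ε : ℝ, 0 < ε → ε ≤ 1 → ∃ N : Finset Ω, (N.card : ℝ) ≤ (CN / ε) ^ ν ∧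
    ∀ ω : Ω, ∃ ω' ∈ N, dist ω ω' ≤ ε

/-- The set `𝔥_R` of `θ` such that `sup|v(·,θ)| + [v(·,θ)]_κ ≤ R`. -/
def HolderSet {Ω Θ : Type*} [MetricSpace Ω] (v : Ω → Θ → ℝ) (κ R : ℝ) : Set Θ :=
  {θ | ∃ Cb Ch : ℝ, 0 ≤ Cb ∧ 0 ≤ Ch ∧ Cb + Ch ≤ R ∧
    (∀ ω, |v ω θ| ≤ Cb) ∧ ∀ ω ω', |v ω θ - v ω' θ| ≤ Ch * dist ω ω' ^ κ}

/-- LIB implies a product bound for ε-separated points. -/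
theorem statement13 {Ω Θ : Type*} [MetricSpace Ω] [MeasurableSpace Θ]
    (P : Measure Θ) [IsProbabilityMeasure P] (v : Ω → Θ → ℝ)
    (η CL ε₀ : ℝ) (hη : 0 < η) (hCL : 0 < CL) (hε₀ : 0 < ε₀) (hε₀' : ε₀ ≤ 1 / 2)
    (hLIB : LIB P v η CL ε₀)
    (ε : ℝ) (hε : 0 < ε) (hεε₀ : ε ≤ ε₀) (n : ℕ) (ω : Fin n → Ω)
    (hsep : ∀ i j, i ≠ j → ε ≤ dist (ω i) (ω j))
    (a b : Fin n → ℝ) (hab : ∀ j, a j ≤ b j) :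
    P {θ | ∀ j, a j ≤ v (ω j) θ ∧ v (ω j) θ ≤ b j} ≤
      ∏ j, ENNReal.ofReal (Real.exp (CL * ε ^ (-η)) * (b j - a j)) := by
  induction n with
  | zero =>
    have h0 : {θ : Θ | ∀ j : Fin 0, a j ≤ v (ω j) θ ∧ v (ω j) θ ≤ b j} = Set.univ := by
      ext θ; simp
    rw [h0]
    simp [measure_univ]
  | succ n ih =>
    set A : Set Θ :=
      {θ | ∀ j : Fin n, a j.succ ≤ v (ω j.succ) θ ∧ v (ω j.succ) θ ≤ b j.succ} with hAdef
    have hsplit : {θ : Θ | ∀ j, a j ≤ v (ω j) θ ∧ v (ω j) θ ≤ b j}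
        = {θ | a 0 ≤ v (ω 0) θ ∧ v (ω 0) θ ≤ b 0} ∩ A := by
      ext θ
      constructor
      · intro h; exact ⟨h 0, fun j => h j.succ⟩
      · rintro ⟨h0, hs⟩ j
        refine Fin.cases ?_ ?_ j
        · exact h0
        · exact hs
    have hAmeas : MeasurableSet[libSigma v (ω 0) ε] A := by
      have hA2 : A = ⋂ j : Fin n,
          {θ | a j.succ ≤ v (ω j.succ) θ ∧ v (ω j.succ) θ ≤ b j.succ} := by
        ext θ; simp [hAdef, Set.mem_iInter]
      rw [hA2]
      refine MeasurableSet.iInter fun j => ?_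
      have hle : MeasurableSpace.comap (v (ω j.succ)) (borel ℝ) ≤ libSigma v (ω 0) ε := by
        refine le_iSup₂ (f := fun ω' (_ : ω' ∈ {ω' : Ω | ε ≤ dist ω' (ω 0)}) =>
          MeasurableSpace.comap (v ω') (borel ℝ)) (ω j.succ) ?_
        exact hsep j.succ 0 (Fin.succ_ne_zero j)
      apply hle
      exact ⟨Set.Icc (a j.succ) (b j.succ), measurableSet_Icc, rfl⟩
    have hstep := hLIB (ω 0) ε hε hεε₀ (a 0) (b 0) (hab 0) A hAmeas
    have hIH := ih (fun j => ω j.succ)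
      (fun i j hij => hsep i.succ j.succ (fun h => hij (Fin.succ_injective n h)))
      (fun j => a j.succ) (fun j => b j.succ) (fun j => hab j.succ)
    calc P {θ | ∀ j, a j ≤ v (ω j) θ ∧ v (ω j) θ ≤ b j}
        ≤ ENNReal.ofReal (Real.exp (CL * ε ^ (-η)) * (b 0 - a 0)) * P A := by
          rw [hsplit]; exact hstep
      _ ≤ ENNReal.ofReal (Real.exp (CL * ε ^ (-η)) * (b 0 - a 0)) *
          ∏ j : Fin n, ENNReal.ofReal (Real.exp (CL * ε ^ (-η)) * (b j.succ - a j.succ)) :=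
          mul_le_mul_right hIH _
      _ = ∏ j : Fin (n + 1), ENNReal.ofReal (Real.exp (CL * ε ^ (-η)) * (b j - a j)) := by
          rw [Fin.prod_univ_succ]
end

section
/- Let M : [0,∞) → [1,∞) be continuous, nondecreasing and unbounded with M(0) = 1, and for each integer j ≥ 1 let R_j = min{t ≥ 0 : M(t) = e^j}. Then for every integer k ≥ 1: ∑_{j=k}^∞ 1/R_j ≤ ∫_{R_k}^∞ (log M(t))/t² dt (an inequality in [0,∞]). -/
open MeasureTheory ENNReal

lemma lint_inv_sq {r : ℝ} (hr : 0 < r) :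
    ENNReal.ofReal (1 / r) = ∫⁻ t in Set.Ioi r, ENNReal.ofReal (1 / t ^ 2) := by
  have h1 : ∫⁻ t in Set.Ioi r, ENNReal.ofReal (1 / t ^ 2)
      = ∫⁻ t in Set.Ioi r, ENNReal.ofReal (t ^ (-2 : ℝ)) := by
    refine setLIntegral_congr_fun measurableSet_Ioi (fun t ht => ?_)
    have ht0 : (0:ℝ) < t := hr.trans ht
    rw [show (-2:ℝ) = -((2:ℕ):ℝ) by norm_num, Real.rpow_neg ht0.le, Real.rpow_natCast, one_div]
  rw [h1, ← ofReal_integral_eq_lintegral_ofReal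
      (integrableOn_Ioi_rpow_of_lt (by norm_num) hr)
      ((ae_restrict_iff' measurableSet_Ioi).2 (ae_of_all _ fun t ht =>
        Real.rpow_nonneg (le_of_lt (hr.trans ht)) _))]
  rw [integral_Ioi_rpow_of_lt (by norm_num) hr]
  norm_num
  rw [Real.rpow_neg_one]

/-- `R_j = min { t ≥ 0 : M t = e^j }` (as an infimum, attained by continuity). -/
noncomputable def Rlev (M : ℝ → ℝ) (j : ℕ) : ℝ :=
  sInf {t : ℝ | 0 ≤ t ∧ M t = Real.exp j}

/-- `∑_{j=k}^∞ 1/R_j ≤ ∫_{R_k}^∞ (log M(t))/t² dt`, an inequality in `[0,∞]`. -/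
theorem statement15 (M : ℝ → ℝ)
    (hcont : ContinuousOn M (Set.Ici 0)) (hmono : MonotoneOn M (Set.Ici 0))
    (hM0 : M 0 = 1) (hM1 : ∀ t, 0 ≤ t → 1 ≤ M t)
    (hunb : ∀ C : ℝ, ∃ t, 0 ≤ t ∧ C < M t)
    (k : ℕ) (hk : 1 ≤ k) :
    (∑' j : ℕ, ENNReal.ofReal (1 / Rlev M (k + j))) ≤
      ∫⁻ t in Set.Ioi (Rlev M k), ENNReal.ofReal (Real.log (M t) / t ^ 2) := by
  -- membership of the infimum in the level set
  have hmem : ∀ j : ℕ, Rlev M j ∈ {t : ℝ | 0 ≤ t ∧ M t = Real.exp j} := by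
    intro j
    have hSeq : {t : ℝ | 0 ≤ t ∧ M t = Real.exp j}
        = Set.Ici (0:ℝ) ∩ M ⁻¹' {Real.exp j} := by
      ext t; simp [Set.mem_Ici, and_comm]
    have hclosed : IsClosed {t : ℝ | 0 ≤ t ∧ M t = Real.exp j} := by
      rw [hSeq]
      exact hcont.preimage_isClosed_of_isClosed isClosed_Ici isClosed_singleton
    have hne : ({t : ℝ | 0 ≤ t ∧ M t = Real.exp j}).Nonempty := by
      obtain ⟨t0, ht0, hC⟩ := hunb (Real.exp j)
      have h1 : (1:ℝ) ≤ Real.exp j := Real.one_le_exp (by positivity)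
      have hmemIcc : Real.exp j ∈ Set.Icc (M 0) (M t0) := ⟨hM0 ▸ h1, le_of_lt hC⟩
      obtain ⟨t, ht, hMt⟩ := intermediate_value_Icc ht0
        (hcont.mono (fun x hx => hx.1)) hmemIcc
      exact ⟨t, ht.1, hMt⟩
    have hbdd : BddBelow {t : ℝ | 0 ≤ t ∧ M t = Real.exp j} := ⟨0, fun t ht => ht.1⟩
    exact hclosed.csInf_mem hne hbdd
  have hR0 : ∀ j, 0 ≤ Rlev M j := fun j => (hmem j).1
  have hRval : ∀ j : ℕ, M (Rlev M j) = Real.exp j := fun j => (hmem j).2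
  have hRmono : ∀ i j : ℕ, i ≤ j → Rlev M i ≤ Rlev M j := by
    intro i j hij
    by_contra h
    push_neg at h
    have := hmono (hR0 j) (hR0 i) h.le
    rw [hRval i, hRval j, Real.exp_le_exp] at this
    have : j ≤ i := by exact_mod_cast this
    have : i = j := le_antisymm hij this
    exact absurd h (by rw [this]; exact lt_irrefl _)
  have hRpos : ∀ j : ℕ, 1 ≤ j → 0 < Rlev M j := by
    intro j hj
    rcases (hR0 j).lt_or_eq with h | h
    · exact h
    · exfalso
      have h1 := hRval j
      rw [← h, hM0] at h1
      have h2 : (1:ℝ) < Real.exp j := by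
        rw [Real.one_lt_exp_iff]
        exact_mod_cast hj
      linarith
  -- key: if R_i ≤ t then e^i ≤ M t
  have hkey : ∀ (i : ℕ) (t : ℝ), Rlev M i ≤ t → Real.exp i ≤ M t := by
    intro i t ht
    calc Real.exp i = M (Rlev M i) := (hRval i).symm
    _ ≤ M t := hmono (hR0 i) (le_trans (hR0 i) ht) ht
  set f : ℕ → ℝ → ℝ≥0∞ := fun j t =>
    Set.indicator (Set.Ici (Rlev M (k+j))) (fun _ => (1:ℝ≥0∞)) t * ENNReal.ofReal (1 / t^2)
    with hf
  have hfmeas : ∀ j, Measurable (f j) := fun j =>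
    (measurable_const.indicator measurableSet_Ici).mul
      ((measurable_const.div ((measurable_id.pow_const 2))).ennreal_ofReal)
  -- step 1 : each term ≤ integral of f j
  have step1 : ∀ j : ℕ, ENNReal.ofReal (1 / Rlev M (k + j))
      ≤ ∫⁻ t in Set.Ioi (Rlev M k), f j t := by
    intro j
    have hindc : ∀ t : ℝ, f j t
        = Set.indicator (Set.Ici (Rlev M (k+j))) (fun t => ENNReal.ofReal (1 / t^2)) t := by
      intro t
      simp only [hf, Set.indicator]
      split <;> simp
    calc ENNReal.ofReal (1 / Rlev M (k + j))
        = ∫⁻ t in Set.Ioi (Rlev M (k+j)), ENNReal.ofReal (1 / t ^ 2) :=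
          lint_inv_sq (hRpos _ (le_trans hk (Nat.le_add_right k j)))
      _ ≤ ∫⁻ t in Set.Ioi (Rlev M k) ∩ Set.Ici (Rlev M (k+j)), ENNReal.ofReal (1 / t ^ 2) := by
          apply lintegral_mono_set
          intro t ht
          exact ⟨lt_of_le_of_lt (hRmono k (k+j) (Nat.le_add_right k j)) ht, Set.mem_Ici.mpr (le_of_lt ht)⟩
      _ = ∫⁻ t in Set.Ioi (Rlev M k), f j t := by
          rw [funext hindc, lintegral_indicator measurableSet_Ici,
            Measure.restrict_restrict measurableSet_Ici, Set.inter_comm]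
  -- step 2 : pointwise sum bound
  have step2 : ∀ t ∈ Set.Ioi (Rlev M k),
      (∑' j : ℕ, f j t) ≤ ENNReal.ofReal (Real.log (M t) / t ^ 2) := by
    intro t ht
    have htpos : 0 < t := lt_of_le_of_lt (hR0 k) ht
    have hMt1 : (1:ℝ) ≤ M t := hM1 t htpos.le
    have hlog0 : 0 ≤ Real.log (M t) := Real.log_nonneg hMt1
    set N := Nat.floor (Real.log (M t)) with hN
    have hsum : (∑' j : ℕ, f j t)
        = (∑' j : ℕ, Set.indicator (Set.Ici (Rlev M (k+j))) (fun _ => (1:ℝ≥0∞)) t)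
          * ENNReal.ofReal (1 / t^2) := by
      simp only [hf]
      exact ENNReal.tsum_mul_right
    rw [hsum]
    have hcount : (∑' j : ℕ, Set.indicator (Set.Ici (Rlev M (k+j))) (fun _ => (1:ℝ≥0∞)) t)
        ≤ (N : ℝ≥0∞) := by
      have hle : ∀ j : ℕ, Set.indicator (Set.Ici (Rlev M (k+j))) (fun _ => (1:ℝ≥0∞)) t
          ≤ Set.indicator (↑(Finset.range N) : Set ℕ) (fun _ => (1:ℝ≥0∞)) j := by
        intro j
        by_cases hmemt : t ∈ Set.Ici (Rlev M (k+j))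
        · have hexp : Real.exp (k+j : ℕ) ≤ M t := hkey (k+j) t hmemt
          have hMtpos : 0 < M t := lt_of_lt_of_le (Real.exp_pos _) hexp
          have hlogle : ((k+j : ℕ) : ℝ) ≤ Real.log (M t) := by
            rwa [Real.le_log_iff_exp_le hMtpos]
          have hjN : j < N := by
            have : ((j+1 : ℕ) : ℝ) ≤ Real.log (M t) := by
              push_cast at hlogle ⊢
              have : (1:ℝ) ≤ (k:ℝ) := by exact_mod_cast hk
              linarith
            have := Nat.le_floor this
            omega
          rw [Set.indicator_of_mem hmemt, Set.indicator_of_mem (by simpa using hjN)]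
        · rw [Set.indicator_of_notMem hmemt]
          exact zero_le
      calc (∑' j : ℕ, Set.indicator (Set.Ici (Rlev M (k+j))) (fun _ => (1:ℝ≥0∞)) t)
          ≤ ∑' j : ℕ, Set.indicator (↑(Finset.range N) : Set ℕ) (fun _ => (1:ℝ≥0∞)) j :=
            ENNReal.tsum_le_tsum hle
        _ = ∑ j ∈ Finset.range N, Set.indicator (↑(Finset.range N) : Set ℕ) (fun _ => (1:ℝ≥0∞)) j :=
            tsum_eq_sum (fun j hj => Set.indicator_of_notMem (by simpa using hj) _)
        _ = (N : ℝ≥0∞) := by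
            rw [Finset.sum_congr rfl (fun j hj => Set.indicator_of_mem (by simpa using hj) _)]
            simp
    calc (∑' j : ℕ, Set.indicator (Set.Ici (Rlev M (k+j))) (fun _ => (1:ℝ≥0∞)) t)
          * ENNReal.ofReal (1 / t^2)
        ≤ (N : ℝ≥0∞) * ENNReal.ofReal (1 / t^2) := by
          exact mul_le_mul_left hcount _
      _ ≤ ENNReal.ofReal (Real.log (M t)) * ENNReal.ofReal (1 / t^2) := by
          apply mul_le_mul_left
          rw [← ENNReal.ofReal_natCast N]
          exact ENNReal.ofReal_le_ofReal (Nat.floor_le hlog0)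
      _ = ENNReal.ofReal (Real.log (M t) / t ^ 2) := by
          rw [← ENNReal.ofReal_mul hlog0, mul_one_div]
  calc (∑' j : ℕ, ENNReal.ofReal (1 / Rlev M (k + j)))
      ≤ ∑' j : ℕ, ∫⁻ t in Set.Ioi (Rlev M k), f j t := ENNReal.tsum_le_tsum step1
    _ = ∫⁻ t in Set.Ioi (Rlev M k), ∑' j : ℕ, f j t :=
        (lintegral_tsum (fun j => (hfmeas j).aemeasurable)).symm
    _ ≤ ∫⁻ t in Set.Ioi (Rlev M k), ENNReal.ofReal (Real.log (M t) / t ^ 2) :=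
        setLIntegral_mono' measurableSet_Ioi step2
end
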